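/- arXiv:1404.7610 — 5 statements merged into one kernel-verified Lean document; each statement's English description precedes it below -/
import Mathlib

section
/- Let G be a finite simple graph and let v be a vertex of G. Then v is contained in some cycle of G if and only if v is contained in some chordless cycle of G. -/
open SimpleGraph

private lemma two_le_of_no_edge {V : Type*} {G : SimpleGraph V} {x y : V}
    (hxy : x ≠ y) (w : G.Walk x y) (hw : s(x, y) ∉ w.edges) : 2 ≤ w.length := by
  cases w with
  | nil => exact absurd rfl hxy
  | cons h' w' =>
    cases w' with
    | nil => simp at hw
    | cons h'' w'' => simp only [Walk.length_cons]; omega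

private lemma mem_support_iff_mem_tail {V : Type*} {G : SimpleGraph V} {b : V}
    (w : G.Walk b b) (hw : ¬ w.Nil) (z : V) : z ∈ w.support ↔ z ∈ w.support.tail := by
  cases w with
  | nil => simp at hw
  | cons h p =>
    simp only [Walk.support_cons, List.tail_cons, List.mem_cons]
    constructor
    · rintro (rfl | hz)
      · exact p.end_mem_support
      · exact hz
    · exact Or.inr

private lemma aux_chordless {V : Type*} {G : SimpleGraph V} (v : V) :
    ∀ (n : ℕ) (a : V) (C : G.Walk a a), C.length = n → C.IsCycle → v ∈ C.support →
      (∃ (a : V) (C : G.Walk a a), C.IsCycle ∧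
        (∀ x y, x ∈ C.support → y ∈ C.support → G.Adj x y → s(x, y) ∈ C.edges) ∧
        v ∈ C.support) := by
  haveI := Classical.decEq V
  intro n
  induction n using Nat.strong_induction_on with
  | _ n ih =>
    intro a C hlen hC hv
    by_cases hch : ∀ x y, x ∈ C.support → y ∈ C.support → G.Adj x y → s(x, y) ∈ C.edges
    · exact ⟨a, C, hC, hch, hv⟩
    · push_neg at hch
      obtain ⟨x, y, hx, hy, hadj, hne⟩ := hch
      have hxy : x ≠ y := hadj.ne
      -- rotate the cycle to start at x
      set C' : G.Walk x x := C.rotate x hx with hC'def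
      have hC' : C'.IsCycle := hC.rotate hx
      have hCnil : ¬ C.Nil := hC.not_nil
      have hC'nil : ¬ C'.Nil := hC'.not_nil
      have hedges : ∀ e, e ∈ C'.edges ↔ e ∈ C.edges := fun e => (C.rotate_edges x hx).mem_iff
      have hne' : s(x, y) ∉ C'.edges := fun h => hne ((hedges _).mp h)
      have hsupp : ∀ z, z ∈ C.support → z ∈ C'.support := by
        intro z hz
        rw [mem_support_iff_mem_tail C hCnil] at hz
        rw [mem_support_iff_mem_tail C' hC'nil]
        exact (C.support_rotate x hx).mem_iff.mpr hz
      have hv' : v ∈ C'.support := hsupp v hv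
      have hy' : y ∈ C'.support := hsupp y hy
      -- split at y
      set p : G.Walk x y := C'.takeUntil y hy' with hp
      set q : G.Walk y x := C'.dropUntil y hy' with hq
      have hspec : p.append q = C' := C'.take_spec hy'
      have hpe : s(x, y) ∉ p.edges := fun h => hne' (C'.edges_takeUntil_subset hy' h)
      have hqe : s(x, y) ∉ q.edges := fun h => hne' (C'.edges_dropUntil_subset hy' h)
      have hplen : 2 ≤ p.length := two_le_of_no_edge hxy p hpe
      have hqlen : 2 ≤ q.length := two_le_of_no_edge hxy.symm q (by
        rwa [Sym2.eq_swap])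
      have hrot : C'.length = C.length := by
        rw [hC'def, Walk.rotate, Walk.length_append, add_comm, ← Walk.length_append,
          Walk.take_spec]
      have hClen : p.length + q.length = n := by
        have h2 : (p.append q).length = C'.length := by rw [hspec]
        rw [Walk.length_append] at h2
        rw [h2, hrot, hlen]
      -- support facts
      have hps : p.support = x :: p.support.tail := p.support_eq_cons
      have hqs : q.support = y :: q.support.tail := q.support_eq_cons
      have htail : C'.support.tail = p.support.tail ++ q.support.tail := by
        have h1 : C'.support = p.support ++ q.support.tail := by
          rw [← hspec, Walk.support_append]
        rw [h1, hps]
        simp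
      have hnodup : (p.support.tail ++ q.support.tail).Nodup := by
        rw [← htail]; exact hC'.2
      have hymem : y ∈ p.support.tail := by
        have h3 := p.end_mem_support
        rw [hps, List.mem_cons] at h3
        exact h3.resolve_left fun h => hxy h.symm
      have hxmem : x ∈ q.support.tail := by
        have h3 := q.end_mem_support
        rw [hqs, List.mem_cons] at h3
        exact h3.resolve_left fun h => hxy h
      have hdisj : List.Disjoint p.support.tail q.support.tail :=
        List.disjoint_of_nodup_append hnodup
      have hpath_p : p.IsPath := by
        rw [Walk.isPath_def, hps, List.nodup_cons]
        exact ⟨fun h => hdisj h hxmem, (List.nodup_append.mp hnodup).1⟩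
      have hpath_q : q.IsPath := by
        rw [Walk.isPath_def, hqs, List.nodup_cons]
        exact ⟨fun h => hdisj hymem h, (List.nodup_append.mp hnodup).2.1⟩
      -- where is v?
      have hv'' : v ∈ p.support ∨ v ∈ q.support := by
        rw [mem_support_iff_mem_tail C' hC'nil, htail, List.mem_append] at hv'
        rcases hv' with h | h
        · exact Or.inl (by rw [hps]; exact List.Mem.tail _ h)
        · exact Or.inr (by rw [hqs]; exact List.Mem.tail _ h)
      rcases hv'' with hvp | hvq
      · -- use the cycle  cons (hadj.symm) p : Walk y y
        have hcyc : (Walk.cons hadj.symm p).IsCycle := by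
          rw [Walk.cons_isCycle_iff]
          exact ⟨hpath_p, by rwa [Sym2.eq_swap]⟩
        refine ih (Walk.cons hadj.symm p).length ?_ y (Walk.cons hadj.symm p) rfl hcyc ?_
        · rw [Walk.length_cons]; omega
        · rw [Walk.support_cons]; exact List.Mem.tail _ hvp
      · -- use the cycle  cons hadj q : Walk x x
        have hcyc : (Walk.cons hadj q).IsCycle := by
          rw [Walk.cons_isCycle_iff]
          exact ⟨hpath_q, hqe⟩
        refine ih (Walk.cons hadj q).length ?_ x (Walk.cons hadj q) rfl hcyc ?_
        · rw [Walk.length_cons]; omega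
        · rw [Walk.support_cons]; exact List.Mem.tail _ hvq

/-- In a finite simple graph `G`, a vertex `v` lies on some cycle
if and only if `v` lies on some chordless cycle.  A cycle `C` is chordless if every
edge of `G` joining two vertices of `C` is an edge of `C`. -/
theorem mem_cycle_iff_mem_chordless_cycle
    {V : Type*} [Fintype V] (G : SimpleGraph V) (v : V) :
    (∃ (a : V) (C : G.Walk a a), C.IsCycle ∧ v ∈ C.support) ↔
      (∃ (a : V) (C : G.Walk a a), C.IsCycle ∧
        (∀ x y, x ∈ C.support → y ∈ C.support → G.Adj x y → s(x, y) ∈ C.edges) ∧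
        v ∈ C.support) := by
  constructor
  · rintro ⟨a, C, hC, hv⟩
    exact aux_chordless v C.length a C rfl hC hv
  · rintro ⟨a, C, hC, _, hv⟩
    exact ⟨a, C, hC, hv⟩
end

section
/- Let G be a finite simple graph, let s and t be distinct vertices of G, let v be a neighbor of s with v ≠ s, and let P be a path from s to t. Then P is a chordless s-t path of G containing v if and only if P with the vertex s removed is a chordless v-t path of the graph G \ (N(s) \ {v}), the induced subgraph of G obtained by deleting every neighbor of s other than v. -/
/-- The graph obtained from `G` by deleting all vertices of `S` together with the
edges incident to them (the induced subgraph `G \ S`, kept on the same vertex type: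
deleted vertices become isolated). -/
def SimpleGraph.delVerts {V : Type*} (G : SimpleGraph V) (S : Set V) : SimpleGraph V where
  Adj u v := G.Adj u v ∧ u ∉ S ∧ v ∉ S
  symm := ⟨fun u v ⟨h, hu, hv⟩ => ⟨h.symm, hv, hu⟩⟩
  loopless := ⟨fun u ⟨h, _, _⟩ => G.irrefl h⟩

lemma walk_edges_zip {V : Type*} {G : SimpleGraph V} :
    ∀ {a b : V} (p : G.Walk a b),
      p.edges = List.zipWith (fun x y => s(x, y)) p.support p.support.tail := by
  intro a b p
  induction p with
  | nil => simp
  | @cons u x w h p ih =>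
    rw [SimpleGraph.Walk.edges_cons, SimpleGraph.Walk.support_cons, ih, p.support_eq_cons]
    simp only [List.tail_cons, List.zipWith_cons_cons]

lemma delVerts_support_not_mem {V : Type*} {G : SimpleGraph V} {S : Set V} :
    ∀ {a b : V} (Q : (G.delVerts S).Walk a b), a ∉ S → ∀ w ∈ Q.support, w ∉ S := by
  intro a b Q
  induction Q with
  | nil => intro ha w hw; simp at hw; subst hw; exact ha
  | @cons u x w h p ih =>
    intro ha y hy
    rw [SimpleGraph.Walk.support_cons, List.mem_cons] at hy
    rcases hy with rfl | hy
    · exact ha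
    · exact ih h.2.2 y hy


/-- Let `G` be a finite simple graph, `s ≠ t` vertices, `v` a
neighbor of `s`, and `P` an `s`-`t` path of `G`.  Then `P` is a chordless `s`-`t`
path of `G` containing `v` if and only if `P` with the vertex `s` removed (the walk
whose support is `P.support.tail`) is a chordless `v`-`t` path of the induced
subgraph `G \ (N(s) \ {v})`.  Chordlessness of a path in a graph `H` means every
edge of `H` joining two vertices of the path is an edge of the path. -/
theorem chordless_path_iff_tail_chordless
    {V : Type*} [Fintype V] (G : SimpleGraph V) (s t : V) (hst : s ≠ t)
    (v : V) (hv : G.Adj s v) (P : G.Walk s t) (hP : P.IsPath) :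
    ((∀ a b, a ∈ P.support → b ∈ P.support → G.Adj a b → s(a, b) ∈ P.edges) ∧
        v ∈ P.support) ↔
      (∃ Q : (G.delVerts (G.neighborSet s \ {v})).Walk v t,
        Q.IsPath ∧
        (∀ a b, a ∈ Q.support → b ∈ Q.support →
          (G.delVerts (G.neighborSet s \ {v})).Adj a b → s(a, b) ∈ Q.edges) ∧
        Q.support = P.support.tail) := by
  set S : Set V := G.neighborSet s \ {v} with hS
  have hvS : v ∉ S := by simp [hS]
  have hmemS : ∀ w, G.Adj s w → w ≠ v → w ∈ S := by
    intro w h1 h2; simp [hS, h1, h2]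
  constructor
  · rintro ⟨hchord, hvmem⟩
    cases P with
    | nil => exact absurd rfl hst
    | cons h p =>
      rename_i x
      rw [SimpleGraph.Walk.cons_isPath_iff] at hP
      obtain ⟨hpPath, hsp⟩ := hP
      have hxv : x = v := by
        have hsv : s(s, v) ∈ (SimpleGraph.Walk.cons h p).edges :=
          hchord s v (by simp) hvmem hv
        rw [SimpleGraph.Walk.edges_cons, List.mem_cons] at hsv
        rcases hsv with heq | hmem
        · exact (Sym2.congr_right.mp heq).symm
        · exact absurd (p.fst_mem_support_of_mem_edges hmem) hsp
      subst hxv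
      have hkey : ∀ w ∈ p.support, w ∉ S := by
        intro w hw hwS
        rw [hS, Set.mem_diff, SimpleGraph.mem_neighborSet, Set.mem_singleton_iff] at hwS
        have hsw : s(s, w) ∈ (SimpleGraph.Walk.cons h p).edges :=
          hchord s w (by simp) (by simp [hw]) hwS.1
        rw [SimpleGraph.Walk.edges_cons, List.mem_cons] at hsw
        rcases hsw with heq | hmem
        · exact hwS.2 (Sym2.congr_right.mp heq)
        · exact absurd (p.fst_mem_support_of_mem_edges hmem) hsp
      have htrans : ∀ e ∈ p.edges, e ∈ (G.delVerts S).edgeSet := by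
        intro e he
        induction e with
        | h a b =>
          exact ⟨p.adj_of_mem_edges he,
            hkey a (p.fst_mem_support_of_mem_edges he),
            hkey b (p.snd_mem_support_of_mem_edges he)⟩
      refine ⟨p.transfer _ htrans, hpPath.transfer _, ?_, ?_⟩
      · intro a b ha hb hadj
        rw [SimpleGraph.Walk.support_transfer] at ha hb
        rw [SimpleGraph.Walk.edges_transfer]
        have hmem : s(a, b) ∈ (SimpleGraph.Walk.cons h p).edges :=
          hchord a b (by simp [ha]) (by simp [hb]) hadj.1
        rw [SimpleGraph.Walk.edges_cons, List.mem_cons] at hmem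
        rcases hmem with heq | hmem
        · rcases Sym2.eq_iff.mp heq with ⟨rfl, rfl⟩ | ⟨rfl, rfl⟩
          · exact absurd ha hsp
          · exact absurd hb hsp
        · exact hmem
      · simp [SimpleGraph.Walk.support_transfer]
  · rintro ⟨Q, hQp, hQc, hQs⟩
    cases P with
    | nil => exact absurd rfl hst
    | cons h p =>
      rename_i x
      rw [SimpleGraph.Walk.cons_isPath_iff] at hP
      obtain ⟨hpPath, hsp⟩ := hP
      have hsupp : Q.support = p.support := by simpa using hQs
      have hxv : x = v := by
        have h1 := Q.support_eq_cons
        have h2 := p.support_eq_cons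
        rw [hsupp, h2] at h1
        exact (List.cons.injEq _ _ _ _ ▸ h1).1
      subst hxv
      have hedges : Q.edges = p.edges := by
        rw [walk_edges_zip, walk_edges_zip, hsupp]
      have hQnotS : ∀ w ∈ Q.support, w ∉ S := delVerts_support_not_mem Q hvS
      refine ⟨?_, ?_⟩
      · intro a b ha hb hab
        rw [SimpleGraph.Walk.support_cons, List.mem_cons] at ha hb
        rw [SimpleGraph.Walk.edges_cons, List.mem_cons]
        rcases ha with rfl | ha
        · rcases hb with rfl | hb
          · exact absurd hab (G.irrefl)
          · have hbQ : b ∈ Q.support := hsupp ▸ hb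
            have hbv : b = x := by
              by_contra hbv
              exact hQnotS b hbQ (hmemS b hab hbv)
            subst hbv; exact Or.inl rfl
        · rcases hb with rfl | hb
          · have haQ : a ∈ Q.support := hsupp ▸ ha
            have hav : a = x := by
              by_contra hav
              exact hQnotS a haQ (hmemS a hab.symm hav)
            subst hav; exact Or.inl (Sym2.eq_swap)
          · have haQ : a ∈ Q.support := hsupp ▸ ha
            have hbQ : b ∈ Q.support := hsupp ▸ hb
            exact Or.inr (hedges ▸ hQc a b haQ hbQ ⟨hab, hQnotS a haQ, hQnotS b hbQ⟩)
      · rw [SimpleGraph.Walk.support_cons, List.mem_cons]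
        exact Or.inr p.start_mem_support
end

section
/- Let G be a finite simple graph and let s and t be distinct vertices of G. Every chordless s-t path of G is, for exactly one neighbor v of s, a chordless s-t path of the induced subgraph G \ (N(s) \ {v}); consequently the family of sets of chordless s-t paths of G \ (N(s) \ {v}), indexed over v ∈ N(s), forms a partition of the set of all chordless s-t paths of G. -/
/-- The set of chordless `s`-`t` paths of the subgraph `H` of `G`, regarded as walks
of `G`: paths all of whose edges lie in `H` and such that every edge of `H` joining
two vertices of the path is an edge of the path. -/
def chordlessPaths {V : Type*} (H G : SimpleGraph V) (s t : V) : Set (G.Walk s t) :=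
  {P | P.IsPath ∧ (∀ e ∈ P.edges, e ∈ H.edgeSet) ∧
    ∀ a b, a ∈ P.support → b ∈ P.support → H.Adj a b → s(a, b) ∈ P.edges}

lemma delVerts_adj {V : Type*} {G : SimpleGraph V} {S : Set V} {a b : V} :
    (G.delVerts S).Adj a b ↔ G.Adj a b ∧ a ∉ S ∧ b ∉ S := Iff.rfl

/-- Every support vertex of a non-nil walk lies on some edge of the walk. -/
lemma mem_edge_of_mem_support {V : Type*} {G : SimpleGraph V} :
    ∀ {a c w : V} (p : G.Walk a c), w ∈ p.support → ¬ p.Nil → ∃ e ∈ p.edges, w ∈ e := by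
  intro a c w p
  induction p with
  | nil => intro _ hn; exact absurd SimpleGraph.Walk.Nil.nil hn
  | @cons a b c h q ih =>
    intro hw _
    simp only [SimpleGraph.Walk.support_cons, List.mem_cons] at hw
    rcases hw with rfl | hw
    · exact ⟨s(w, b), by simp, by simp⟩
    · cases q with
      | nil =>
        simp only [SimpleGraph.Walk.support_nil, List.mem_singleton] at hw
        subst hw
        exact ⟨s(a, w), by simp, by simp⟩
      | cons h' q' =>
        obtain ⟨e, he, hwe⟩ := ih hw (SimpleGraph.Walk.not_nil_cons)
        refine ⟨e, ?_, hwe⟩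
        simp only [SimpleGraph.Walk.edges_cons, List.mem_cons] at he ⊢
        exact Or.inr he

/-- In a non-nil walk all of whose edges lie in `G.delVerts S`, every support vertex
avoids `S`. -/
lemma supp_not_mem {V : Type*} {G : SimpleGraph V} {S : Set V} {a c w : V}
    (p : G.Walk a c) (he : ∀ e ∈ p.edges, e ∈ (G.delVerts S).edgeSet)
    (hw : w ∈ p.support) (hn : ¬ p.Nil) : w ∉ S := by
  obtain ⟨e, hep, hwe⟩ := mem_edge_of_mem_support p hw hn
  have h1 := he e hep
  induction e with
  | h x y =>
    rw [SimpleGraph.mem_edgeSet, delVerts_adj] at h1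
    rcases Sym2.mem_iff.mp hwe with rfl | rfl
    · exact h1.2.1
    · exact h1.2.2

/-- Membership in `chordlessPaths (G.delVerts (N(s)\{v})) G` pins down the second
vertex of the path. -/
lemma uniq_second {V : Type*} {G : SimpleGraph V} {s t u v : V}
    (h : G.Adj s u) (q : G.Walk u t)
    (hP : SimpleGraph.Walk.cons h q ∈
      chordlessPaths (G.delVerts (G.neighborSet s \ {v})) G s t) : u = v := by
  have h1 := hP.2.1 s(s, u) (by simp)
  rw [SimpleGraph.mem_edgeSet, delVerts_adj] at h1
  have hu := h1.2.2
  simp only [Set.mem_diff, SimpleGraph.mem_neighborSet, Set.mem_singleton_iff,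
    not_and, not_not] at hu
  exact hu h

/-- A chordless path of a `delVerts` subgraph is a chordless path of `G`. -/
lemma subset_chordless {V : Type*} {G : SimpleGraph V} {s t v : V} (hst : s ≠ t)
    {P : G.Walk s t}
    (hP : P ∈ chordlessPaths (G.delVerts (G.neighborSet s \ {v})) G s t) :
    P ∈ chordlessPaths G G s t := by
  obtain ⟨hpath, he, hch⟩ := hP
  cases P with
  | nil => exact absurd rfl hst
  | cons h q =>
    refine ⟨hpath, fun e heq => (SimpleGraph.Walk.cons h q).edges_subset_edgeSet heq, ?_⟩
    intro a b ha hb hab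
    exact hch a b ha hb ⟨hab,
      supp_not_mem _ he ha SimpleGraph.Walk.not_nil_cons,
      supp_not_mem _ he hb SimpleGraph.Walk.not_nil_cons⟩

/-- A chordless path of `G` starting with edge `s—u` is a chordless path of
`G.delVerts (N(s)\{u})`. -/
lemma exists_chordless {V : Type*} {G : SimpleGraph V} {s t u : V}
    (h : G.Adj s u) (q : G.Walk u t)
    (hP : SimpleGraph.Walk.cons h q ∈ chordlessPaths G G s t) :
    SimpleGraph.Walk.cons h q ∈
      chordlessPaths (G.delVerts (G.neighborSet s \ {u})) G s t := by
  obtain ⟨hpath, _, hch⟩ := hP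
  have hsq : s ∉ q.support := (SimpleGraph.Walk.cons_isPath_iff h q |>.mp hpath).2
  have key : ∀ w ∈ (SimpleGraph.Walk.cons h q).support, w ∈ G.neighborSet s → w = u := by
    intro w hw hwN
    rw [SimpleGraph.mem_neighborSet] at hwN
    have hedge := hch s w (SimpleGraph.Walk.start_mem_support _) hw hwN
    simp only [SimpleGraph.Walk.edges_cons, List.mem_cons] at hedge
    rcases hedge with heq | hmem
    · rw [Sym2.eq_iff] at heq
      rcases heq with ⟨_, h2⟩ | ⟨h1, h2⟩
      · exact h2
      · rw [h2] at hwN; exact absurd hwN (G.irrefl)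
    · exact absurd (SimpleGraph.Walk.fst_mem_support_of_mem_edges q hmem) hsq
  have hnotS : ∀ w ∈ (SimpleGraph.Walk.cons h q).support,
      w ∉ G.neighborSet s \ {u} := by
    intro w hw hwS
    exact hwS.2 (key w hw hwS.1)
  refine ⟨hpath, ?_, ?_⟩
  · intro e heq
    induction e with
    | h a b =>
      rw [SimpleGraph.mem_edgeSet, delVerts_adj]
      exact ⟨(SimpleGraph.Walk.cons h q).edges_subset_edgeSet heq,
        hnotS a (SimpleGraph.Walk.fst_mem_support_of_mem_edges _ heq),
        hnotS b (SimpleGraph.Walk.snd_mem_support_of_mem_edges _ heq)⟩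
  · intro a b ha hb hab
    exact hch a b ha hb hab.1

/-- Let `G` be a finite simple graph and `s ≠ t` vertices.  Every
chordless `s`-`t` path of `G` is, for exactly one neighbor `v` of `s`, a chordless
`s`-`t` path of the induced subgraph `G \ (N(s) \ {v})`; consequently the family of
sets of chordless `s`-`t` paths of `G \ (N(s) \ {v})`, indexed over `v ∈ N(s)`, is
pairwise disjoint and its union is the set of all chordless `s`-`t` paths of `G`,
i.e. it forms a partition of that set. -/
theorem chordless_paths_partition
    {V : Type*} [Fintype V] (G : SimpleGraph V) (s t : V) (hst : s ≠ t) :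
    (∀ P ∈ chordlessPaths G G s t, ∃! v, v ∈ G.neighborSet s ∧
        P ∈ chordlessPaths (G.delVerts (G.neighborSet s \ {v})) G s t) ∧
    Set.PairwiseDisjoint (G.neighborSet s)
        (fun v => chordlessPaths (G.delVerts (G.neighborSet s \ {v})) G s t) ∧
    (⋃ v ∈ G.neighborSet s,
        chordlessPaths (G.delVerts (G.neighborSet s \ {v})) G s t) =
      chordlessPaths G G s t := by
  refine ⟨?_, ?_, ?_⟩
  · intro P hP
    cases P with
    | nil => exact absurd rfl hst
    | cons h q =>
      exact ⟨_, ⟨h, exists_chordless h q hP⟩,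
        fun y hy => (uniq_second h q hy.2).symm⟩
  · intro v hv w hw hvw
    simp only [Function.onFun]
    rw [Set.disjoint_left]
    intro P hPv hPw
    cases P with
    | nil => exact hst rfl
    | cons h q =>
      exact hvw ((uniq_second h q hPv).symm.trans (uniq_second h q hPw))
  · ext P
    simp only [Set.mem_iUnion]
    constructor
    · rintro ⟨v, _, hP⟩
      exact subset_chordless hst hP
    · intro hP
      cases P with
      | nil => exact absurd rfl hst
      | cons h q =>
        exact ⟨_, h, exists_chordless h q hP⟩
end

section
/- Let G be a finite simple graph, let s and t be distinct vertices with t not adjacent to s, and let v be a neighbor of s. Then the graph (G \ (N(s) \ {v})) \ {s} contains a v-t path if and only if there exists a vertex u ∈ N(v) with u ∉ N(s) and u ≠ s such that the graph (G \ N(s)) \ {s} contains a u-t path (where a u-t path with u = t is the trivial single-vertex path). -/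
lemma reach_via_neighbor_aux {V : Type*} (G : SimpleGraph V) (s v t : V)
    (hv : v ∈ G.neighborSet s) (ht : t ∉ G.neighborSet s) {w : V}
    (p : ((G.delVerts (G.neighborSet s \ {v})).delVerts {s}).Walk w t) :
    (∃ u, G.Adj v u ∧ u ∉ G.neighborSet s ∧ u ≠ s ∧
      ((G.delVerts (G.neighborSet s)).delVerts {s}).Reachable u t) ∨
    (w ≠ v ∧ ((G.delVerts (G.neighborSet s)).delVerts {s}).Reachable w t) := by
  induction p with
  | nil =>
    right
    exact ⟨fun h => ht (h ▸ hv), .refl _⟩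
  | @cons a b c h q ih =>
    obtain ⟨⟨hadj, ha1, hb1⟩, ha2, hb2⟩ := h
    rcases ih ht with hl | ⟨hbv, hr⟩
    · exact Or.inl hl
    · have hbNs : b ∉ G.neighborSet s := fun hb => hb1 ⟨hb, hbv⟩
      by_cases hav : a = v
      · subst hav
        exact Or.inl ⟨b, hadj, hbNs, fun h => hb2 (Set.mem_singleton_iff.mpr h), hr⟩
      · have haNs : a ∉ G.neighborSet s := fun hha => ha1 ⟨hha, hav⟩
        refine Or.inr ⟨hav, SimpleGraph.Reachable.trans ?_ hr⟩
        exact SimpleGraph.Adj.reachable ⟨⟨hadj, haNs, hbNs⟩, ha2, hb2⟩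

/-- Let `G` be a finite simple graph, `s ≠ t` vertices with `t`
not adjacent to `s`, and `v` a neighbor of `s`.  Then `(G \ (N(s) \ {v})) \ {s}`
contains a `v`-`t` path if and only if there is a vertex `u ∈ N(v)` with
`u ∉ N(s)` and `u ≠ s` such that `(G \ N(s)) \ {s}` contains a `u`-`t` path
(reachability; with `u = t` the trivial single-vertex path qualifies). -/
theorem reach_via_neighbor
    {V : Type*} [Fintype V] (G : SimpleGraph V) (s t v : V) (hst : s ≠ t)
    (hnadj : ¬ G.Adj s t) (hv : G.Adj s v) :
    ((G.delVerts (G.neighborSet s \ {v})).delVerts {s}).Reachable v t ↔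
      ∃ u, u ∈ G.neighborSet v ∧ u ∉ G.neighborSet s ∧ u ≠ s ∧
        ((G.delVerts (G.neighborSet s)).delVerts {s}).Reachable u t := by
  constructor
  · rintro ⟨p⟩
    rcases reach_via_neighbor_aux G s v t hv hnadj p with hl | ⟨hvv, _⟩
    · obtain ⟨u, h1, h2, h3, h4⟩ := hl
      exact ⟨u, h1, h2, h3, h4⟩
    · exact absurd rfl hvv
  · rintro ⟨u, h1, h2, h3, h4⟩
    have hvs : v ≠ s := fun h => G.loopless.irrefl s (h ▸ hv)
    have hmono : ((G.delVerts (G.neighborSet s)).delVerts {s}).Reachable u t →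
        ((G.delVerts (G.neighborSet s \ {v})).delVerts {s}).Reachable u t := by
      apply SimpleGraph.Reachable.mono
      rintro a b ⟨⟨hadj, ha1, hb1⟩, ha2, hb2⟩
      exact ⟨⟨hadj, fun h => ha1 h.1, fun h => hb1 h.1⟩, ha2, hb2⟩
    refine SimpleGraph.Reachable.trans (SimpleGraph.Adj.reachable ?_) (hmono h4)
    exact ⟨⟨h1, fun h => h.2 rfl, fun h => h2 h.1⟩, hvs, h3⟩
end

section
/- Let G be a finite simple graph and let s and t be distinct, non-adjacent vertices of G such that G contains an s-t path. Then there exists a neighbor v of s such that the induced subgraph G \ (N(s) \ {v}) contains a chordless v-t path avoiding s; in particular, at least one branch of the recursive decomposition of the chordless s-t paths of G by the vertex of N(s) used is nonempty. -/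
open SimpleGraph

private lemma walk_length_one_edge {V : Type*} {G : SimpleGraph V} {a b : V}
    (C : G.Walk a b) (h1 : C.length = 1) : s(a, b) ∈ C.edges := by
  cases C with
  | nil => simp at h1
  | cons h q =>
    rw [Walk.length_cons, Nat.add_left_inj] at h1
    have := Walk.eq_of_length_eq_zero h1
    subst this
    simp

private lemma shortcut_walk {V : Type*} [DecidableEq V] {G : SimpleGraph V} {s t a b : V}
    (hab : G.Adj a b) (A : G.Walk s a) (B : G.Walk a t) (hb : b ∈ B.support)
    (hne : s(a, b) ∉ B.edges) :
    ∃ W' : G.Walk s t, W'.length < A.length + B.length := by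
  have hsplit := congrArg Walk.length (B.take_spec hb)
  rw [Walk.length_append] at hsplit
  have hlt : 2 ≤ (B.takeUntil b hb).length := by
    rcases h0 : (B.takeUntil b hb).length with _ | _ | n
    · exact absurd (Walk.eq_of_length_eq_zero h0) hab.ne
    · exact absurd (B.edges_takeUntil_subset hb (walk_length_one_edge _ h0)) hne
    · omega
  refine ⟨A.append ((B.dropUntil b hb).cons hab), ?_⟩
  rw [Walk.length_append, Walk.length_cons]
  omega

private lemma minimal_chordless {V : Type*} [DecidableEq V] {G : SimpleGraph V} {s t : V}
    (P : G.Walk s t) (hmin : ∀ W : G.Walk s t, P.length ≤ W.length)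
    {a b : V} (ha : a ∈ P.support) (hb : b ∈ P.support) (hab : G.Adj a b) :
    s(a, b) ∈ P.edges := by
  by_contra hne
  have hsplit := P.take_spec ha
  have hb' : b ∈ (P.takeUntil a ha).support ∨ b ∈ (P.dropUntil a ha).support := by
    rw [← hsplit] at hb
    exact (Walk.mem_support_append_iff _ _).mp hb
  have hlenP := congrArg Walk.length hsplit
  rw [Walk.length_append] at hlenP
  cases hb' with
  | inr hbd =>
    have hneB : s(a, b) ∉ (P.dropUntil a ha).edges :=
      fun h => hne (P.edges_dropUntil_subset ha h)
    obtain ⟨W', hW'⟩ := shortcut_walk hab (P.takeUntil a ha) (P.dropUntil a ha) hbd hneB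
    have := hmin W'
    omega
  | inl hbt =>
    set A := P.takeUntil a ha with hA
    set B2 := (A.dropUntil b hbt).append (P.dropUntil a ha) with hB2
    have haB : a ∈ B2.support := by
      rw [hB2]
      exact (Walk.mem_support_append_iff _ _).mpr (Or.inl (Walk.end_mem_support _))
    have hneB : s(b, a) ∉ B2.edges := by
      rw [hB2, Walk.edges_append]
      intro h
      rw [Sym2.eq_swap] at h
      rcases List.mem_append.mp h with h | h
      · exact hne (P.edges_takeUntil_subset ha (A.edges_dropUntil_subset hbt h))
      · exact hne (P.edges_dropUntil_subset ha h)
    obtain ⟨W', hW'⟩ := shortcut_walk hab.symm (A.takeUntil b hbt) B2 haB hneB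
    have h2 := hmin W'
    have hAsplit := congrArg Walk.length (A.take_spec hbt)
    rw [Walk.length_append] at hAsplit
    rw [hB2, Walk.length_append] at hW'
    omega

private lemma main_aux {V : Type*} (G : SimpleGraph V) (s t : V) (hst : s ≠ t)
    (P : G.Walk s t) (hPpath : P.IsPath)
    (chord : ∀ a b, a ∈ P.support → b ∈ P.support → G.Adj a b → s(a, b) ∈ P.edges) :
    ∃ v, v ∈ G.neighborSet s ∧
      ∃ Q : (G.delVerts (G.neighborSet s \ {v})).Walk v t,
        Q.IsPath ∧ s ∉ Q.support ∧
        ∀ a b, a ∈ Q.support → b ∈ Q.support →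
          (G.delVerts (G.neighborSet s \ {v})).Adj a b → s(a, b) ∈ Q.edges := by
  cases P with
  | nil => exact absurd rfl hst
  | @cons _ v _ h P' =>
    rw [Walk.cons_isPath_iff] at hPpath
    obtain ⟨hP'path, hsP'⟩ := hPpath
    -- no vertex of P' other than v is a neighbor of s
    have hx : ∀ x ∈ P'.support, x ∉ G.neighborSet s \ {v} := by
      rintro x hxsup ⟨hadj, hxv⟩
      have hedge := chord s x (by simp) (by rw [Walk.support_cons]; exact List.mem_cons_of_mem _ hxsup) hadj
      rw [Walk.edges_cons, List.mem_cons] at hedge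
      rcases hedge with hedge | hedge
      · exact hxv (Sym2.congr_right.mp hedge)
      · exact hsP' (Walk.fst_mem_support_of_mem_edges P' hedge)
    have hedges : ∀ e ∈ P'.edges, e ∈ (G.delVerts (G.neighborSet s \ {v})).edgeSet := by
      intro e he
      induction e with
      | h x y =>
        exact ⟨Walk.adj_of_mem_edges P' he,
          hx x (Walk.fst_mem_support_of_mem_edges P' he),
          hx y (Walk.snd_mem_support_of_mem_edges P' he)⟩
    refine ⟨v, h, P'.transfer _ hedges, ?_, ?_, ?_⟩
    · rw [Walk.isPath_def, Walk.support_transfer, ← Walk.isPath_def]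
      exact hP'path
    · rw [Walk.support_transfer]; exact hsP'
    · intro a b ha hb hadj
      rw [Walk.support_transfer] at ha hb
      rw [Walk.edges_transfer]
      have has : a ≠ s := fun h' => hsP' (h' ▸ ha)
      have hbs : b ≠ s := fun h' => hsP' (h' ▸ hb)
      have hedge := chord a b
        (by rw [Walk.support_cons]; exact List.mem_cons_of_mem _ ha)
        (by rw [Walk.support_cons]; exact List.mem_cons_of_mem _ hb) hadj.1
      rw [Walk.edges_cons, List.mem_cons] at hedge
      rcases hedge with hedge | hedge
      · rw [Sym2.eq_iff] at hedge
        rcases hedge with ⟨h1, _⟩ | ⟨_, h2⟩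
        · exact absurd h1 has
        · exact absurd h2 hbs
      · exact hedge

/-- Let `G` be a finite simple graph and `s`, `t` distinct,
non-adjacent vertices such that `G` contains an `s`-`t` path.  Then there is a
neighbor `v` of `s` such that the induced subgraph `G \ (N(s) \ {v})` contains a
chordless `v`-`t` path avoiding `s`; in particular at least one branch of the
recursive decomposition of the chordless `s`-`t` paths of `G` by the vertex of
`N(s)` used is nonempty. -/
theorem exists_nonempty_branch
    {V : Type*} [Fintype V] (G : SimpleGraph V) (s t : V) (hst : s ≠ t)
    (hnadj : ¬ G.Adj s t) (hpath : ∃ W : G.Walk s t, W.IsPath) :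
    ∃ v, v ∈ G.neighborSet s ∧
      ∃ Q : (G.delVerts (G.neighborSet s \ {v})).Walk v t,
        Q.IsPath ∧ s ∉ Q.support ∧
        ∀ a b, a ∈ Q.support → b ∈ Q.support →
          (G.delVerts (G.neighborSet s \ {v})).Adj a b → s(a, b) ∈ Q.edges := by
  classical
  obtain ⟨W0, _⟩ := hpath
  have hex : ∃ n, ∃ W : G.Walk s t, W.length = n := ⟨W0.length, W0, rfl⟩
  obtain ⟨W, hWlen⟩ := Nat.find_spec hex
  have hmin : ∀ W' : G.Walk s t, W.length ≤ W'.length := fun W' => by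
    rw [hWlen]; exact Nat.find_le ⟨W', rfl⟩
  have hminP : ∀ W' : G.Walk s t, W.bypass.length ≤ W'.length := fun W' =>
    le_trans W.length_bypass_le (hmin W')
  exact main_aux G s t hst W.bypass W.bypass_isPath
    (fun a b ha hb hab => minimal_chordless W.bypass hminP ha hb hab)
end
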